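/- There exist a constant C > 0 and d₀ such that for all d ≥ d₀ and every fixed unit vector u ∈ ℝ^d the following holds: if v is a uniformly random point on the unit sphere S^{d−1} ⊆ ℝ^d and α = d^{9/8}, then E[ exp( min( α·(u·v)⁴, α·d^{−1/2} ) ) ] ≤ 1 + C·α/d². -/

import Mathlib

open MeasureTheory Metric ProbabilityTheory

/-- The uniform (rotation-invariant) probability distribution on the unit sphere of `ℝ^d`,
viewed as a measure on the ambient space. -/
noncomputable def uniformSphere (d : ℕ) : Measure (EuclideanSpace ℝ (Fin d)) :=
  ((volume : Measure (EuclideanSpace ℝ (Fin d))).toSphere Set.univ)⁻¹ •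
    Measure.map Subtype.val ((volume : Measure (EuclideanSpace ℝ (Fin d))).toSphere)

/-!
Write `X = ⟪u, v⟫`. Integrating `⟪u, x⟫^{2m} e^{-‖x‖²/2}` over `ℝ^d` once in polar coordinates and
once as a product of one-dimensional integrals gives
`E[X^{2m}] = (2m-1)!! / (d (d+2) ⋯ (d+2m-2)) ≤ (2m/d)^m`.
Truncating the exponential series of `exp (min (α X⁴) c)` after `N ≈ 8c` terms, the `n`-th term
has expectation at most `(48 α n / d²)^n`, so the terms `n ≥ 1` sum to `O(α/d²)` as long as
`48 α N / d² ≤ 1/2`, while the Taylor remainder is at most `c^N e^c / N! ≤ e^{-7c}`.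
For `α = d^{9/8}` and `c = α d^{-1/2} = d^{5/8}` both error terms are `O(α/d²)`.
-/

open Real Set

noncomputable def halfGaussianMoment (k : ℕ) : ℝ := ∫ r in Ioi (0 : ℝ), r ^ k * exp (-r ^ 2 / 2)

theorem halfGaussianMoment_eq_Gamma (k : ℕ) :
    halfGaussianMoment k = (1 / 2 : ℝ) ^ (-((k : ℝ) + 1) / 2) * (1 / 2) * Gamma ((k + 1) / 2) := by
  rw [← integral_rpow_mul_exp_neg_mul_rpow two_pos (by linarith [k.cast_nonneg (α := ℝ)])
    one_half_pos, halfGaussianMoment]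
  refine setIntegral_congr_fun measurableSet_Ioi fun r _ ↦ ?_
  simp only [rpow_natCast, rpow_two]
  ring_nf

theorem halfGaussianMoment_pos (k : ℕ) : 0 < halfGaussianMoment k := by
  rw [halfGaussianMoment_eq_Gamma]
  have := Gamma_pos_of_pos (s := ((k : ℝ) + 1) / 2) (by positivity)
  positivity

theorem halfGaussianMoment_add_two (k : ℕ) :
    halfGaussianMoment (k + 2) = (k + 1) * halfGaussianMoment k := by
  have hΓ : Gamma ((((k + 2 : ℕ) : ℝ) + 1) / 2) = (k + 1) / 2 * Gamma ((k + 1) / 2) := by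
    rw [← Gamma_add_one (by positivity)]; push_cast; ring_nf
  have hpow : (1 / 2 : ℝ) ^ (-(((k + 2 : ℕ) : ℝ) + 1) / 2) =
      2 * (1 / 2 : ℝ) ^ (-((k : ℝ) + 1) / 2) := by
    rw [show -(((k + 2 : ℕ) : ℝ) + 1) / 2 = -((k : ℝ) + 1) / 2 + (-1) by push_cast; ring,
      rpow_add one_half_pos, rpow_neg_one]
    ring
  rw [halfGaussianMoment_eq_Gamma, halfGaussianMoment_eq_Gamma, hΓ, hpow]
  ring

theorem le_halfGaussianMoment_add_two_mul (p m : ℕ) :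
    ((p : ℝ) + 1) ^ m * halfGaussianMoment p ≤ halfGaussianMoment (p + 2 * m) := by
  induction m with
  | zero => simp
  | succ m ih =>
    rw [show p + 2 * (m + 1) = p + 2 * m + 2 by ring, halfGaussianMoment_add_two, pow_succ',
      mul_assoc]
    have := halfGaussianMoment_pos (p + 2 * m)
    calc ((p : ℝ) + 1) * (((p : ℝ) + 1) ^ m * halfGaussianMoment p)
        ≤ ((p : ℝ) + 1) * halfGaussianMoment (p + 2 * m) := by gcongr
      _ ≤ ((p + 2 * m : ℕ) + 1) * halfGaussianMoment (p + 2 * m) := by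
          gcongr ?_ * _; push_cast; linarith [m.cast_nonneg (α := ℝ)]

theorem halfGaussianMoment_add_two_mul_le (p m : ℕ) :
    halfGaussianMoment (p + 2 * m) ≤ ((p : ℝ) + 2 * m) ^ m * halfGaussianMoment p := by
  induction m with
  | zero => simp
  | succ m ih =>
    rw [show p + 2 * (m + 1) = p + 2 * m + 2 by ring, halfGaussianMoment_add_two, pow_succ']
    have := halfGaussianMoment_pos (p + 2 * m)
    calc _ ≤ ((p : ℝ) + 2 * (m + 1 : ℕ)) * halfGaussianMoment (p + 2 * m) := by
          gcongr ?_ * _; push_cast; linarith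
      _ ≤ ((p : ℝ) + 2 * (m + 1 : ℕ)) *
            (((p : ℝ) + 2 * (m + 1 : ℕ)) ^ m * halfGaussianMoment p) := by
          gcongr
          refine ih.trans ?_
          gcongr
          · exact (halfGaussianMoment_pos p).le
          · linarith
      _ = _ := by ring

theorem integral_pow_mul_exp_neg_sq_div_two (m : ℕ) :
    ∫ t : ℝ, t ^ (2 * m) * exp (-t ^ 2 / 2) = 2 * halfGaussianMoment (2 * m) := by
  rw [halfGaussianMoment, ← integral_comp_abs (f := fun t ↦ t ^ (2 * m) * exp (-t ^ 2 / 2))]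
  simp only [(even_two_mul m).pow_abs, sq_abs]

theorem MeasureTheory.Measure.integral_volumeIoiPow (n : ℕ) (g : ℝ → ℝ) :
    ∫ r, g r ∂(Measure.volumeIoiPow n) = ∫ r in Ioi (0 : ℝ), r ^ n * g r := by
  simp only [Measure.volumeIoiPow, ENNReal.ofReal]
  rw [integral_withDensity_eq_integral_smul ((measurable_subtype_coe.pow_const _).real_toNNReal),
    integral_subtype_comap measurableSet_Ioi fun r ↦ (r ^ n).toNNReal • g r]
  refine setIntegral_congr_fun measurableSet_Ioi fun r hr ↦ ?_
  rw [NNReal.smul_def, Real.coe_toNNReal _ (pow_nonneg hr.out.le _), smul_eq_mul]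

theorem integral_mul_exp_neg_norm_sq_of_homogeneous {E : Type*} [NormedAddCommGroup E]
    [NormedSpace ℝ E] [FiniteDimensional ℝ E] [Nontrivial E] [MeasurableSpace E] [BorelSpace E]
    (μ : Measure E) [μ.IsAddHaarMeasure] {f : E → ℝ} {n : ℕ}
    (hf : ∀ (r : ℝ) (x : E), 0 < r → f (r • x) = r ^ n * f x) :
    ∫ x, f x * exp (-‖x‖ ^ 2 / 2) ∂μ =
      (∫ y, f y ∂μ.toSphere) * halfGaussianMoment (n + (Module.finrank ℝ E - 1)) := by
  calc ∫ x, f x * exp (-‖x‖ ^ 2 / 2) ∂μ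
      = ∫ x : ({0}ᶜ : Set E), f x * exp (-‖(x : E)‖ ^ 2 / 2) ∂(μ.comap (↑)) := by
        rw [integral_subtype_comap (measurableSet_singleton _).compl
          fun x ↦ f x * exp (-‖x‖ ^ 2 / 2), restrict_compl_singleton]
    _ = ∫ p : sphere (0 : E) 1 × Ioi (0 : ℝ), f p.1 * ((p.2 : ℝ) ^ n * exp (-(p.2 : ℝ) ^ 2 / 2))
          ∂(μ.toSphere.prod (Measure.volumeIoiPow (Module.finrank ℝ E - 1))) := by
        rw [← μ.measurePreserving_homeomorphUnitSphereProd.integral_comp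
          (Homeomorph.measurableEmbedding _)]
        congr 1 with ⟨x, hx⟩
        have hfx := hf ‖x‖ (‖x‖⁻¹ • x) (norm_pos_iff.2 hx)
        rw [smul_inv_smul₀ (norm_ne_zero_iff.2 hx)] at hfx
        rw [homeomorphUnitSphereProd_apply_fst_coe, homeomorphUnitSphereProd_apply_snd_coe, hfx]
        ring
    _ = (∫ y, f y ∂μ.toSphere) * halfGaussianMoment (n + (Module.finrank ℝ E - 1)) := by
        rw [integral_prod_mul (fun y : sphere (0 : E) 1 ↦ f y)
          fun r : Ioi (0 : ℝ) ↦ (r : ℝ) ^ n * exp (-(r : ℝ) ^ 2 / 2),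
          Measure.integral_volumeIoiPow _ fun r ↦ r ^ n * exp (-r ^ 2 / 2), halfGaussianMoment]
        congr 1
        refine setIntegral_congr_fun measurableSet_Ioi fun r _ ↦ ?_
        ring

theorem integral_comp_inner_norm_eq_of_norm_eq {E : Type*} [NormedAddCommGroup E]
    [InnerProductSpace ℝ E] [FiniteDimensional ℝ E] [MeasurableSpace E] [BorelSpace E]
    (F : ℝ → ℝ → ℝ) {u w : E} (h : ‖u‖ = ‖w‖) :
    ∫ x, F (inner ℝ u x) ‖x‖ = ∫ x, F (inner ℝ w x) ‖x‖ := by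
  set T := Submodule.reflection (ℝ ∙ (u - w))ᗮ
  have hTu : T u = w := Submodule.reflection_sub h
  conv_rhs => rw [← T.measurePreserving.integral_comp T.toHomeomorph.measurableEmbedding]
  simp only [← hTu, T.inner_map_map, T.norm_map]

theorem EuclideanSpace.integral_apply_pow_mul_exp_neg_norm_sq {ι : Type*} [Fintype ι] (i : ι)
    (m : ℕ) :
    ∫ x : EuclideanSpace ℝ ι, x i ^ (2 * m) * exp (-‖x‖ ^ 2 / 2) =
      2 * halfGaussianMoment (2 * m) * (2 * halfGaussianMoment 0) ^ (Fintype.card ι - 1) := by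
  classical
  set k : ι → ℕ := fun j ↦ if j = i then m else 0
  calc ∫ x : EuclideanSpace ℝ ι, x i ^ (2 * m) * exp (-‖x‖ ^ 2 / 2)
      = ∫ z : ι → ℝ, ∏ j, z j ^ (2 * k j) * exp (-z j ^ 2 / 2) := by
        rw [← ((EuclideanSpace.volume_preserving_symm_measurableEquiv_toLp ι).symm).integral_comp']
        congr 1 with z
        rw [Finset.prod_mul_distrib, ← exp_sum,
          Finset.prod_eq_single i (fun j _ hj ↦ by simp [k, hj]) (by simp),
          EuclideanSpace.norm_eq, sq_sqrt (by positivity)]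
        simp only [k, if_pos, Real.norm_eq_abs, sq_abs, ← Finset.sum_div, Finset.sum_neg_distrib,
          neg_div]
        rfl
    _ = ∏ j, ∫ t : ℝ, t ^ (2 * k j) * exp (-t ^ 2 / 2) :=
        integral_fintype_prod_volume_eq_prod (fun j t ↦ t ^ (2 * k j) * exp (-t ^ 2 / 2))
    _ = _ := by
        simp only [integral_pow_mul_exp_neg_sq_div_two]
        rw [← Finset.mul_prod_erase _ _ (Finset.mem_univ i), Finset.prod_congr rfl
          (g := fun _ ↦ 2 * halfGaussianMoment 0)
          (fun j hj ↦ by simp [k, Finset.ne_of_mem_erase hj]), Finset.prod_const,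
          Finset.card_erase_of_mem (Finset.mem_univ i), Finset.card_univ]
        simp [k]

section UniformSphere

variable {d : ℕ}

theorem integral_uniformSphere (g : EuclideanSpace ℝ (Fin d) → ℝ) :
    ∫ v, g v ∂uniformSphere d =
      ((volume : Measure (EuclideanSpace ℝ (Fin d))).toSphere.real univ)⁻¹ *
        ∫ y, g y ∂(volume : Measure (EuclideanSpace ℝ (Fin d))).toSphere := by
  rw [uniformSphere, integral_smul_measure, ENNReal.toReal_inv, measureReal_def, smul_eq_mul,
    (MeasurableEmbedding.subtype_coe isClosed_sphere.measurableSet).integral_map]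

theorem isProbabilityMeasure_uniformSphere [NeZero d] :
    IsProbabilityMeasure (uniformSphere d) := by
  have hne : (volume : Measure (EuclideanSpace ℝ (Fin d))).toSphere univ ≠ 0 := by
    rw [Measure.toSphere_apply_univ, finrank_euclideanSpace_fin]
    exact mul_ne_zero (by simp [NeZero.ne d]) (measure_ball_pos _ _ one_pos).ne'
  constructor
  rw [uniformSphere, Measure.smul_apply, Measure.map_apply measurable_subtype_coe
    MeasurableSet.univ, preimage_univ, smul_eq_mul]
  exact ENNReal.inv_mul_cancel hne (measure_ne_top _ _)

theorem ae_norm_eq_one_uniformSphere : ∀ᵐ v ∂uniformSphere d, ‖v‖ = 1 := by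
  refine Measure.ae_smul_measure ?_ _
  rw [ae_map_iff measurable_subtype_coe.aemeasurable
    (measurableSet_eq_fun measurable_norm measurable_const)]
  exact Filter.Eventually.of_forall fun y ↦ mem_sphere_zero_iff_norm.1 y.2

theorem ae_abs_inner_le_one_uniformSphere {u : EuclideanSpace ℝ (Fin d)} (hu : ‖u‖ = 1) :
    ∀ᵐ v ∂uniformSphere d, |inner ℝ u v| ≤ 1 :=
  ae_norm_eq_one_uniformSphere.mono fun v hv ↦ by
    simpa [hu, hv] using abs_real_inner_le_norm u v

theorem integral_toSphere_inner_pow_mul_halfGaussianMoment {u : EuclideanSpace ℝ (Fin d)}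
    (hu : ‖u‖ = 1) (m : ℕ) :
    (∫ y, inner ℝ u (y : EuclideanSpace ℝ (Fin d)) ^ (2 * m)
        ∂(volume : Measure (EuclideanSpace ℝ (Fin d))).toSphere) *
      halfGaussianMoment (2 * m + (d - 1)) =
      2 * halfGaussianMoment (2 * m) * (2 * halfGaussianMoment 0) ^ (d - 1) := by
  have : Nontrivial (EuclideanSpace ℝ (Fin d)) := nontrivial_of_ne u 0 (by rintro rfl; simp at hu)
  have : NeZero d := ⟨fun hd ↦ by subst hd; exact not_nontrivial _ this⟩
  have hom (r : ℝ) (x : EuclideanSpace ℝ (Fin d)) (_ : 0 < r) :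
      inner ℝ u (r • x) ^ (2 * m) = r ^ (2 * m) * inner ℝ u x ^ (2 * m) := by
    rw [inner_smul_right, mul_pow]
  have polar := integral_mul_exp_neg_norm_sq_of_homogeneous volume
    (f := fun x ↦ inner ℝ u x ^ (2 * m)) hom
  rw [finrank_euclideanSpace_fin] at polar
  rw [← polar, integral_comp_inner_norm_eq_of_norm_eq (fun a r ↦ a ^ (2 * m) * exp (-r ^ 2 / 2))
      (w := EuclideanSpace.single 0 1) (by simp [hu])]
  simp only [EuclideanSpace.inner_single_left, map_one, one_mul]
  rw [EuclideanSpace.integral_apply_pow_mul_exp_neg_norm_sq, Fintype.card_fin]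

theorem integral_inner_pow_uniformSphere {u : EuclideanSpace ℝ (Fin d)} (hu : ‖u‖ = 1) (m : ℕ) :
    ∫ v, inner ℝ u v ^ (2 * m) ∂uniformSphere d =
      halfGaussianMoment (2 * m) * halfGaussianMoment (d - 1) /
        (halfGaussianMoment 0 * halfGaussianMoment (2 * m + (d - 1))) := by
  have hm := integral_toSphere_inner_pow_mul_halfGaussianMoment hu m
  have h0 := integral_toSphere_inner_pow_mul_halfGaussianMoment hu 0
  simp only [mul_zero, pow_zero, integral_const, smul_eq_mul, mul_one, zero_add] at h0
  have := halfGaussianMoment_pos 0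
  have := halfGaussianMoment_pos (d - 1)
  have := halfGaussianMoment_pos (2 * m + (d - 1))
  rw [integral_uniformSphere, eq_div_of_mul_eq (by positivity) h0,
    eq_div_of_mul_eq (by positivity) hm]
  field_simp

theorem integral_inner_pow_uniformSphere_le {u : EuclideanSpace ℝ (Fin d)} (hu : ‖u‖ = 1)
    (m : ℕ) : ∫ v, inner ℝ u v ^ (2 * m) ∂uniformSphere d ≤ (2 * m / d) ^ m := by
  have hd : 1 ≤ d := by
    rcases Nat.eq_zero_or_pos d with rfl | hd
    · simp [Subsingleton.elim u 0] at hu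
    · exact hd
  have hnum := halfGaussianMoment_add_two_mul_le 0 m
  have hden := le_halfGaussianMoment_add_two_mul (d - 1) m
  rw [Nat.cast_sub hd, Nat.cast_one, sub_add_cancel, add_comm (d - 1)] at hden
  simp only [zero_add, CharP.cast_eq_zero] at hnum
  have := halfGaussianMoment_pos 0
  have := halfGaussianMoment_pos (d - 1)
  have := halfGaussianMoment_pos (2 * m + (d - 1))
  rw [integral_inner_pow_uniformSphere hu, div_pow, div_le_div_iff₀ (by positivity) (by positivity)]
  calc halfGaussianMoment (2 * m) * halfGaussianMoment (d - 1) * d ^ m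
      ≤ (2 * m) ^ m * halfGaussianMoment 0 * halfGaussianMoment (d - 1) * d ^ m := by gcongr
    _ = (2 * m) ^ m * halfGaussianMoment 0 * (d ^ m * halfGaussianMoment (d - 1)) := by ring
    _ ≤ (2 * m) ^ m * halfGaussianMoment 0 * halfGaussianMoment (2 * m + (d - 1)) := by gcongr
    _ = _ := by ring

end UniformSphere

section TruncatedExponential

open Finset
open scoped Nat

theorem Real.exp_le_sum_add_pow_mul_exp_div_factorial {x : ℝ} (hx : 0 ≤ x) (N : ℕ) :
    exp x ≤ ∑ n ∈ range N, x ^ n / n ! + x ^ N * exp x / N ! := by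
  have hexp (y : ℝ) : HasSum (fun n ↦ y ^ n / n !) (exp y) := by
    rw [exp_eq_exp_ℝ]; exact NormedSpace.expSeries_div_hasSum_exp y
  have htail (k : ℕ) : x ^ (k + N) / (k + N)! ≤ x ^ N / N ! * (x ^ k / k !) := by
    rw [div_mul_div_comm, ← pow_add, add_comm N]
    gcongr
    exact_mod_cast Nat.le_of_dvd (Nat.factorial_pos _)
      (Nat.factorial_mul_factorial_dvd_factorial_add N k) |>.trans_eq (by rw [add_comm])
  conv_lhs => rw [← (hexp x).tsum_eq, ← (hexp x).summable.sum_add_tsum_nat_add N]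
  gcongr
  calc ∑' k, x ^ (k + N) / (k + N)!
      ≤ ∑' k, x ^ N / N ! * (x ^ k / k !) :=
        ((summable_nat_add_iff N).2 (hexp x).summable).tsum_le_tsum htail
          ((hexp x).summable.mul_left _)
    _ = x ^ N * exp x / N ! := by rw [tsum_mul_left, (hexp x).tsum_eq]; ring

theorem Real.exp_min_le_sum_add {a c : ℝ} (ha : 0 ≤ a) (hc : 0 ≤ c) (N : ℕ) :
    exp (min a c) ≤ ∑ n ∈ range N, a ^ n / n ! + c ^ N * exp c / N ! := by
  refine (exp_le_sum_add_pow_mul_exp_div_factorial (le_min ha hc) N).trans ?_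
  gcongr with n
  · exact min_le_left a c
  · exact min_le_right a c
  · exact min_le_right a c

theorem Real.pow_mul_exp_div_factorial_le_exp_neg {c : ℝ} {N : ℕ} (hc : 0 ≤ c) (hN : 8 * c ≤ N) :
    c ^ N * exp c / N ! ≤ exp (-(7 * c)) := by
  have he : exp 2 ≤ 8 := by
    rw [show (2 : ℝ) = 1 + 1 by norm_num, exp_add]
    nlinarith [exp_one_lt_d9, exp_pos 1]
  calc c ^ N * exp c / N !
      ≤ (N / 8) ^ N * exp c / N ! := by gcongr; linarith
    _ = (N ^ N / N !) * exp c / 8 ^ N := by rw [div_pow]; ring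
    _ ≤ exp N * exp c / exp 2 ^ N := by gcongr; exact pow_div_factorial_le_exp _ N.cast_nonneg N
    _ = exp (-N + c) := by rw [← exp_nat_mul, ← exp_add, ← exp_sub]; ring_nf
    _ ≤ exp (-(7 * c)) := by gcongr; linarith

theorem pow_le_three_pow_mul_factorial (n : ℕ) : (n : ℝ) ^ n ≤ 3 ^ n * n ! := by
  have h := pow_div_factorial_le_exp (n : ℝ) n.cast_nonneg n
  rw [div_le_iff₀ (by positivity)] at h
  refine h.trans ?_
  gcongr
  rw [← exp_one_pow]
  gcongr
  linarith [exp_one_lt_d9]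

theorem pow_mul_moment_div_factorial_le {x D : ℝ} (hx : 0 ≤ x) (hD : 0 < D) (n : ℕ) :
    x ^ n * (2 * (2 * n : ℕ) / D) ^ (2 * n) / n ! ≤ (48 * x / D ^ 2 * n) ^ n := by
  have hmom : (2 * (2 * n : ℕ) / D) ^ (2 * n) = (16 / D ^ 2) ^ n * (n ^ n * n ^ n) := by
    push_cast; rw [pow_mul, ← mul_pow, ← mul_pow]; congr 1; field_simp; ring
  rw [hmom, div_le_iff₀ (by positivity)]
  calc x ^ n * ((16 / D ^ 2) ^ n * (n ^ n * n ^ n))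
      = (16 * x / D ^ 2 * n) ^ n * (n : ℝ) ^ n := by rw [← mul_pow, ← mul_pow, ← mul_pow]; ring
    _ ≤ (16 * x / D ^ 2 * n) ^ n * (3 ^ n * n !) := by
        gcongr; exact pow_le_three_pow_mul_factorial n
    _ = (48 * x / D ^ 2 * n) ^ n * n ! := by rw [← mul_assoc, ← mul_pow]; ring

theorem sum_range_mul_cast_pow_le {q : ℝ} {N : ℕ} (hq : 0 ≤ q) (hqN : q * N ≤ 1 / 2) :
    ∑ n ∈ range N, (q * n) ^ n ≤ 1 + 4 * q := by
  have hterm (n : ℕ) (hn : n ∈ range N) :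
      (q * n) ^ n ≤ (if n = 0 then 1 else 0) + 2 * q * (n * (1 / 2) ^ n) := by
    rcases n with _ | k
    · simp
    have : q * (k + 1 : ℕ) ≤ 1 / 2 := hqN.trans' (by gcongr; exact (mem_range.1 hn).le)
    calc (q * (k + 1 : ℕ)) ^ (k + 1) = q * (k + 1 : ℕ) * (q * (k + 1 : ℕ)) ^ k := pow_succ' _ _
      _ ≤ q * (k + 1 : ℕ) * (1 / 2) ^ k := by gcongr
      _ = _ := by simp only [Nat.add_one_ne_zero, if_false]; ring
  have hgeom : HasSum (fun n : ℕ ↦ (n : ℝ) * (1 / 2) ^ n) 2 := by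
    have h := hasSum_coe_mul_geometric_of_norm_lt_one (𝕜 := ℝ) (r := 1 / 2) (by norm_num)
    norm_num at h ⊢
    exact h
  calc ∑ n ∈ range N, (q * n) ^ n
      ≤ ∑ n ∈ range N, ((if n = 0 then 1 else 0) + 2 * q * (n * (1 / 2) ^ n)) :=
        sum_le_sum hterm
    _ = (if 0 ∈ range N then 1 else 0) + 2 * q * ∑ n ∈ range N, (n : ℝ) * (1 / 2) ^ n := by
        rw [sum_add_distrib, sum_ite_eq', mul_sum]
    _ ≤ 1 + 2 * q * 2 := by
        gcongr
        · split_ifs <;> norm_num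
        · exact (hgeom.summable.sum_le_tsum _ fun n _ ↦ by positivity).trans_eq hgeom.tsum_eq
    _ = 1 + 4 * q := by ring

variable {Ω : Type*} [MeasurableSpace Ω] {μ : Measure Ω} [IsProbabilityMeasure μ] {X : Ω → ℝ}

theorem integral_exp_min_mul_pow_four_le_sum_moments (hX : AEStronglyMeasurable X μ)
    (hX1 : ∀ᵐ ω ∂μ, |X ω| ≤ 1) {α c : ℝ} (hα : 0 ≤ α) (hc : 0 ≤ c) (N : ℕ) :
    ∫ ω, exp (min (α * X ω ^ 4) c) ∂μ ≤
      ∑ n ∈ range N, α ^ n / n ! * ∫ ω, X ω ^ (2 * (2 * n)) ∂μ + c ^ N * exp c / N ! := by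
  have hint (k : ℕ) : Integrable (fun ω ↦ X ω ^ k) μ :=
    Integrable.of_bound (f := fun ω ↦ X ω ^ k) (hX.pow k) 1 <| hX1.mono fun ω h ↦ by
      rw [norm_pow, Real.norm_eq_abs]; exact pow_le_one₀ (abs_nonneg _) h
  have hterm (n : ℕ) (ω : Ω) :
      (α * X ω ^ 4) ^ n / n ! = α ^ n / n ! * X ω ^ (2 * (2 * n)) := by
    rw [mul_pow, ← pow_mul]; ring_nf
  have hsum : Integrable (fun ω ↦ ∑ n ∈ range N, α ^ n / n ! * X ω ^ (2 * (2 * n))) μ :=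
    integrable_finsetSum _ fun n _ ↦ (hint _).const_mul _
  calc ∫ ω, exp (min (α * X ω ^ 4) c) ∂μ
      ≤ ∫ ω, (∑ n ∈ range N, α ^ n / n ! * X ω ^ (2 * (2 * n)) + c ^ N * exp c / N !) ∂μ :=
        integral_mono_of_nonneg (.of_forall fun _ ↦ (exp_pos _).le) (hsum.add (integrable_const _))
          (.of_forall fun ω ↦
            (exp_min_le_sum_add (by positivity) hc N).trans_eq (by simp only [hterm]))
    _ = _ := by
        rw [integral_add hsum (integrable_const _),
          integral_finsetSum _ fun n _ ↦ (hint _).const_mul _]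
        simp [integral_const_mul]

theorem integral_exp_min_mul_pow_four_le (hX : AEStronglyMeasurable X μ) (hX1 : ∀ᵐ ω ∂μ, |X ω| ≤ 1)
    {D : ℝ} (hD : 0 < D) (hmom : ∀ m : ℕ, ∫ ω, X ω ^ (2 * m) ∂μ ≤ (2 * m / D) ^ m)
    {α c : ℝ} (hα : 0 ≤ α) (hc : 0 ≤ c) (hαc : 48 * α * (8 * c + 1) ≤ D ^ 2 / 2) :
    ∫ ω, exp (min (α * X ω ^ 4) c) ∂μ ≤ 1 + 192 * α / D ^ 2 + exp (-(7 * c)) := by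
  set N := ⌈8 * c⌉₊
  set q := 48 * α / D ^ 2
  have hqN : q * N ≤ 1 / 2 := by
    calc q * N ≤ q * (8 * c + 1) := by
          gcongr; exact (Nat.ceil_lt_add_one (by positivity)).le
      _ ≤ 1 / 2 := by rw [div_mul_eq_mul_div, div_le_iff₀ (by positivity)]; linarith
  calc ∫ ω, exp (min (α * X ω ^ 4) c) ∂μ
      ≤ ∑ n ∈ range N, α ^ n / n ! * ∫ ω, X ω ^ (2 * (2 * n)) ∂μ + c ^ N * exp c / N ! :=
        integral_exp_min_mul_pow_four_le_sum_moments hX hX1 hα hc N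
    _ ≤ ∑ n ∈ range N, (q * n) ^ n + exp (-(7 * c)) := by
        gcongr with n
        · calc α ^ n / n ! * ∫ ω, X ω ^ (2 * (2 * n)) ∂μ
              ≤ α ^ n / n ! * (2 * (2 * n : ℕ) / D) ^ (2 * n) := by gcongr; exact hmom _
            _ ≤ (q * n) ^ n :=
                (le_of_eq (by ring)).trans (pow_mul_moment_div_factorial_le hα hD n)
        · exact pow_mul_exp_div_factorial_le_exp_neg hc (Nat.le_ceil _)
    _ ≤ 1 + 4 * q + exp (-(7 * c)) := by
        gcongr; exact sum_range_mul_cast_pow_le (by positivity) hqN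
    _ = 1 + 192 * α / D ^ 2 + exp (-(7 * c)) := by ring

end TruncatedExponential

theorem integral_exp_min_mul_inner_pow_four_uniformSphere_le {d : ℕ}
    {u : EuclideanSpace ℝ (Fin d)} (hu : ‖u‖ = 1) {t : ℝ} (ht0 : 0 < t) (hdt : (d : ℝ) = t ^ 8)
    (ht : 1000 ≤ t ^ 2) :
    ∫ v, exp (min (t ^ 9 * inner ℝ u v ^ 4) (t ^ 5)) ∂uniformSphere d ≤
      1 + 193 * t ^ 9 / (d : ℝ) ^ 2 := by
  have ht1 : 1 ≤ t := by nlinarith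
  have hd : (0 : ℝ) < d := by rw [hdt]; positivity
  have : NeZero d := ⟨by exact_mod_cast hd.ne'⟩
  have := isProbabilityMeasure_uniformSphere (d := d)
  have hαc : 48 * t ^ 9 * (8 * t ^ 5 + 1) ≤ (d : ℝ) ^ 2 / 2 := by
    calc 48 * t ^ 9 * (8 * t ^ 5 + 1) ≤ 48 * t ^ 9 * (9 * t ^ 5) := by
          gcongr; linarith [one_le_pow₀ (n := 5) ht1]
      _ ≤ t ^ 2 / 2 * t ^ 14 := by nlinarith [pow_pos ht0 14]
      _ = (d : ℝ) ^ 2 / 2 := by rw [hdt]; ring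
  have hrem : exp (-(7 * t ^ 5)) ≤ t ^ 9 / (d : ℝ) ^ 2 := by
    have ht5 : t ≤ exp (t ^ 5) :=
      (le_self_pow₀ ht1 (by norm_num)).trans ((le_add_of_nonneg_right zero_le_one).trans
        (add_one_le_exp _))
    calc exp (-(7 * t ^ 5)) = (exp (t ^ 5) ^ 7)⁻¹ := by rw [← exp_nat_mul, ← exp_neg]; ring_nf
      _ ≤ (t ^ 7)⁻¹ := by gcongr
      _ = t ^ 9 / (d : ℝ) ^ 2 := by rw [hdt]; field_simp
  calc _ ≤ 1 + 192 * t ^ 9 / (d : ℝ) ^ 2 + exp (-(7 * t ^ 5)) :=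
        integral_exp_min_mul_pow_four_le (X := fun v ↦ inner ℝ u v)
          (continuous_const.inner continuous_id).aestronglyMeasurable
          (ae_abs_inner_le_one_uniformSphere hu) hd (integral_inner_pow_uniformSphere_le hu)
          (by positivity) (by positivity) hαc
    _ ≤ 1 + 193 * t ^ 9 / (d : ℝ) ^ 2 := by
        linarith [show 193 * t ^ 9 / (d : ℝ) ^ 2 = 192 * t ^ 9 / d ^ 2 + t ^ 9 / d ^ 2 by ring]

theorem EuclideanSpace.sum_mul_eq_inner {ι : Type*} [Fintype ι] (u v : EuclideanSpace ℝ ι) :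
    ∑ k, u k * v k = inner ℝ u v := by
  simp [PiLp.inner_apply, mul_comm]

/-- There are `C > 0` and `d₀` such that for all `d ≥ d₀` and every unit vector `u`:
if `v` is uniform on the sphere and `α = d^{9/8}`, then
`E[exp(min(α·(u·v)⁴, α·d^{−1/2}))] ≤ 1 + C·α/d²`. -/
theorem light_mgf_bound :
    ∃ C : ℝ, 0 < C ∧ ∃ d₀ : ℕ, ∀ d : ℕ, d₀ ≤ d →
      ∀ u : EuclideanSpace ℝ (Fin d), ‖u‖ = 1 →
        (∫ v, Real.exp (min ((d : ℝ) ^ ((9 : ℝ) / 8) * (∑ k, u k * v k) ^ 4)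
              ((d : ℝ) ^ ((9 : ℝ) / 8) * (d : ℝ) ^ (-(1 : ℝ) / 2)))
            ∂(uniformSphere d)) ≤
          1 + C * (d : ℝ) ^ ((9 : ℝ) / 8) / (d : ℝ) ^ 2 := by
  refine ⟨193, by norm_num, 10 ^ 12, fun d hd u hu ↦ ?_⟩
  set t := (d : ℝ) ^ ((1 : ℝ) / 8)
  have hrpow (a : ℝ) : (d : ℝ) ^ a = t ^ (8 * a) := by
    rw [← rpow_mul d.cast_nonneg]; ring_nf
  have hdt : (d : ℝ) = t ^ 8 := by rw [← rpow_one (d : ℝ), hrpow, ← rpow_natCast]; norm_num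
  have hα : (d : ℝ) ^ ((9 : ℝ) / 8) = t ^ 9 := by rw [hrpow, ← rpow_natCast]; norm_num
  have hc : (d : ℝ) ^ ((9 : ℝ) / 8) * (d : ℝ) ^ (-(1 : ℝ) / 2) = t ^ 5 := by
    rw [hrpow, hrpow, ← rpow_add (by positivity), ← rpow_natCast]; norm_num
  have ht : 1000 ≤ t ^ 2 := by
    rw [← pow_le_pow_iff_left₀ (by norm_num) (by positivity) (by norm_num : 4 ≠ 0), ← pow_mul,
      ← hdt]
    exact_mod_cast hd
  simp only [EuclideanSpace.sum_mul_eq_inner]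
  rw [hc, hα]
  exact integral_exp_min_mul_inner_pow_four_uniformSphere_le hu (by positivity) hdt ht
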